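/- For every real number i ≥ 2, the Euclidean inner product of adjacent layer-norm hashes satisfies φ(i, 1) · φ(i − 1, 1) ≤ 1 − 1/(2i⁴). -/

import Mathlib

/-!
Since ⟨x, y, −x, −y⟩ already has mean zero, φ(x, y) is its normalization, so
⟪φ(x, y), φ(x', y')⟫ is the cosine c of the angle between (x, y) and (x', y'). Lagrange's identity
gives 1 − c² = (xy' − x'y)² / ((x² + y²)(x'² + y'²)), and 1 − c ≥ (1 − c²)/2 always. For the
points (i, 1) and (i − 1, 1) the cross term is 1, and (i² + 1)((i − 1)² + 1) ≤ i⁴ once i ≥ 2.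
-/

open scoped RealInnerProductSpace

/-- Layer norm: subtract the mean, then normalize to unit Euclidean norm. -/
noncomputable def layerNorm {ι : Type*} [Fintype ι] (v : EuclideanSpace ℝ ι) :
    EuclideanSpace ℝ ι :=
  let c : EuclideanSpace ℝ ι := WithLp.toLp 2 (fun j => v j - (∑ l, v l) / (Fintype.card ι))
  ‖c‖⁻¹ • c

/-- The layer-norm hash φ(x, y) = layer_norm(⟨x, y, −x, −y⟩) ∈ ℝ⁴. -/
noncomputable def lnHash (x y : ℝ) : EuclideanSpace ℝ (Fin 4) :=
  layerNorm (WithLp.toLp 2 ![x, y, -x, -y] : EuclideanSpace ℝ (Fin 4))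

theorem layerNorm_of_sum_eq_zero {ι : Type*} [Fintype ι] (v : EuclideanSpace ℝ ι)
    (hv : ∑ l, v l = 0) : layerNorm v = ‖v‖⁻¹ • v := by
  simp [layerNorm, hv]

section HashVector

variable (x y x' y' : ℝ)

theorem inner_toLp_hashVector :
    ⟪(WithLp.toLp 2 ![x, y, -x, -y] : EuclideanSpace ℝ (Fin 4)),
      WithLp.toLp 2 ![x', y', -x', -y']⟫ = 2 * (x * x' + y * y') := by
  simp only [PiLp.inner_apply, RCLike.inner_apply, Real.ringHom_apply, Fin.sum_univ_four,
    Matrix.cons_val_zero, Matrix.cons_val_one, Matrix.cons_val, mul_neg, neg_mul, neg_neg]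
  ring

theorem norm_toLp_hashVector :
    ‖(WithLp.toLp 2 ![x, y, -x, -y] : EuclideanSpace ℝ (Fin 4))‖ = √2 * √(x ^ 2 + y ^ 2) := by
  rw [← Real.sqrt_mul zero_le_two, EuclideanSpace.norm_eq]
  congr 1
  simp only [Real.norm_eq_abs, sq_abs, Fin.sum_univ_four, Matrix.cons_val_zero,
    Matrix.cons_val_one, Matrix.cons_val, even_two, Even.neg_pow]
  ring

theorem lnHash_eq :
    lnHash x y = ‖(WithLp.toLp 2 ![x, y, -x, -y] : EuclideanSpace ℝ (Fin 4))‖⁻¹ •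
      (WithLp.toLp 2 ![x, y, -x, -y] : EuclideanSpace ℝ (Fin 4)) :=
  layerNorm_of_sum_eq_zero _ (by simp [Fin.sum_univ_four])

theorem inner_lnHash_lnHash :
    ⟪lnHash x y, lnHash x' y'⟫ = (x * x' + y * y') / (√(x ^ 2 + y ^ 2) * √(x' ^ 2 + y' ^ 2)) := by
  rw [lnHash_eq, lnHash_eq, real_inner_smul_left, real_inner_smul_right, inner_toLp_hashVector,
    norm_toLp_hashVector, norm_toLp_hashVector]
  have h2 : √2 * √2 = 2 := Real.mul_self_sqrt zero_le_two
  calc (√2 * √(x ^ 2 + y ^ 2))⁻¹ * ((√2 * √(x' ^ 2 + y' ^ 2))⁻¹ * (2 * (x * x' + y * y')))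
      = 2 / (√2 * √2) * ((x * x' + y * y') / (√(x ^ 2 + y ^ 2) * √(x' ^ 2 + y' ^ 2))) := by ring
    _ = _ := by rw [h2, div_self two_ne_zero, one_mul]

end HashVector

theorem sq_cross_div_le_one_sub_cos {x y x' y' : ℝ} (h : 0 < x ^ 2 + y ^ 2)
    (h' : 0 < x' ^ 2 + y' ^ 2) :
    (x * y' - x' * y) ^ 2 / (2 * ((x ^ 2 + y ^ 2) * (x' ^ 2 + y' ^ 2))) ≤
      1 - (x * x' + y * y') / (√(x ^ 2 + y ^ 2) * √(x' ^ 2 + y' ^ 2)) := by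
  set c := (x * x' + y * y') / (√(x ^ 2 + y ^ 2) * √(x' ^ 2 + y' ^ 2))
  have lagrange : (x * y' - x' * y) ^ 2 =
      (x ^ 2 + y ^ 2) * (x' ^ 2 + y' ^ 2) - (x * x' + y * y') ^ 2 := by
    ring
  have hc : c ^ 2 = (x * x' + y * y') ^ 2 / ((x ^ 2 + y ^ 2) * (x' ^ 2 + y' ^ 2)) := by
    rw [div_pow, mul_pow, Real.sq_sqrt h.le, Real.sq_sqrt h'.le]
  have sin_sq : (x * y' - x' * y) ^ 2 / ((x ^ 2 + y ^ 2) * (x' ^ 2 + y' ^ 2)) = 1 - c ^ 2 := by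
    rw [hc, lagrange, sub_div, div_self (by positivity)]
  calc (x * y' - x' * y) ^ 2 / (2 * ((x ^ 2 + y ^ 2) * (x' ^ 2 + y' ^ 2)))
        = (1 - c ^ 2) / 2 := by rw [← sin_sq, div_div, mul_comm (2 : ℝ)]
    _ ≤ 1 - c := by nlinarith [sq_nonneg (1 - c)]

/-- For i ≥ 2, φ(i,1) · φ(i−1,1) ≤ 1 − 1/(2i⁴). -/
theorem lnHash_adjacent_inner_bound (i : ℝ) (hi : 2 ≤ i) :
    ⟪lnHash i 1, lnHash (i - 1) 1⟫ ≤ 1 - 1 / (2 * i ^ 4) := by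
  have key := sq_cross_div_le_one_sub_cos (x := i) (y := 1) (x' := i - 1) (y' := 1)
    (by positivity) (by positivity)
  have cross : i * 1 - (i - 1) * 1 = 1 := by ring
  have norms_le : (i ^ 2 + 1 ^ 2) * ((i - 1) ^ 2 + 1 ^ 2) ≤ i ^ 4 := by
    nlinarith [mul_nonneg (sq_nonneg i) (by linarith : (0 : ℝ) ≤ 2 * i - 3)]
  rw [cross, one_pow] at key
  have inv_bound_le : 1 / (2 * i ^ 4) ≤ 1 / (2 * ((i ^ 2 + 1 ^ 2) * ((i - 1) ^ 2 + 1 ^ 2))) :=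
    one_div_le_one_div_of_le (by positivity) (by linarith)
  rw [inner_lnHash_lnHash]
  linarith
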